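/- The bracket [A, B] := A ⊛ B − B ⊛ A makes M_{m×n}(ℝ) a Lie algebra: the bracket is bilinear, skew-symmetric ([A,B] = −[B,A]), and satisfies the Jacobi identity [[A,B],C] + [[B,C],A] + [[C,A],B] = 0. -/
import Mathlib


open Matrix Kronecker Finset

noncomputable section

/-- The all-ones column vector of length `k`, viewed as a `k × 1` matrix. -/
def onesCol (k : ℕ) : Matrix (Fin k) (Fin 1) ℝ := Matrix.of fun _ _ => 1

/-- `A ⊗ 1ᵀ_α`, reindexed to an ordinary `Fin`-indexed matrix. -/
def rightExpand {m n : ℕ} (A : Matrix (Fin m) (Fin n) ℝ) (α : ℕ) :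
    Matrix (Fin m) (Fin (n * α)) ℝ :=
  Matrix.reindex (Equiv.prodUnique (Fin m) (Fin 1)) finProdFinEquiv (A ⊗ₖ (onesCol α)ᵀ)

/-- `B ⊗ 1_β`, reindexed to an ordinary `Fin`-indexed matrix. -/
def leftExpand {p q : ℕ} (B : Matrix (Fin p) (Fin q) ℝ) (β : ℕ) :
    Matrix (Fin (p * β)) (Fin q) ℝ :=
  Matrix.reindex finProdFinEquiv (Equiv.prodUnique (Fin q) (Fin 1)) (B ⊗ₖ onesCol β)

theorem dk_dim_eq (n p : ℕ) :
    n * (Nat.lcm n p / n) = p * (Nat.lcm n p / p) := by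
  rw [Nat.mul_div_cancel' (Nat.dvd_lcm_left n p),
    Nat.mul_div_cancel' (Nat.dvd_lcm_right n p)]

/-- The dimension keeping semi-tensor product (DK-STP)
`A ⊛ B := (A ⊗ 1ᵀ_{t/n})(B ⊗ 1_{t/p})`, `t = lcm(n,p)`. -/
def dkstp {m n p q : ℕ} (A : Matrix (Fin m) (Fin n) ℝ) (B : Matrix (Fin p) (Fin q) ℝ) :
    Matrix (Fin m) (Fin q) ℝ :=
  rightExpand A (Nat.lcm n p / n) *
    (leftExpand B (Nat.lcm n p / p)).submatrix (Fin.cast (dk_dim_eq n p)) id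

infixl:70 " ⊛ " => dkstp

/-- The bridge matrix `Ψ_{n×p} := (I_n ⊗ 1ᵀ_{t/n})(I_p ⊗ 1_{t/p})`. -/
def bridge (n p : ℕ) : Matrix (Fin n) (Fin p) ℝ :=
  (1 : Matrix (Fin n) (Fin n) ℝ) ⊛ (1 : Matrix (Fin p) (Fin p) ℝ)

/-- `x ⊗ 1_α`, as a vector of length `m * α`. -/
def vecExpand {m : ℕ} (x : Fin m → ℝ) (α : ℕ) : Fin (m * α) → ℝ :=
  fun i => x (finProdFinEquiv.symm i).1

/-- The VV-STP `x ⊙ y := (x ⊗ 1_{t/m})ᵀ(y ⊗ 1_{t/n})`, `t = lcm(m,n)`. -/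
def vvstp {m n : ℕ} (x : Fin m → ℝ) (y : Fin n → ℝ) : ℝ :=
  vecExpand x (Nat.lcm m n / m) ⬝ᵥ
    fun i => vecExpand y (Nat.lcm m n / n) (Fin.cast (dk_dim_eq m n) i)



lemma rightExpand_apply {m n : ℕ} (A : Matrix (Fin m) (Fin n) ℝ) (α : ℕ)
    (i : Fin m) (j : Fin (n * α)) :
    rightExpand A α i j = A i (finProdFinEquiv.symm j).1 := by
  simp [rightExpand, onesCol, Matrix.reindex_apply, Matrix.submatrix_apply]

lemma leftExpand_apply {p q : ℕ} (B : Matrix (Fin p) (Fin q) ℝ) (β : ℕ)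
    (i : Fin (p * β)) (j : Fin q) :
    leftExpand B β i j = B (finProdFinEquiv.symm i).1 j := by
  simp [leftExpand, onesCol, Matrix.reindex_apply, Matrix.submatrix_apply]

lemma rightExpand_mul {m n : ℕ} (A : Matrix (Fin m) (Fin n) ℝ) (α : ℕ) :
    rightExpand A α = A * rightExpand (1 : Matrix (Fin n) (Fin n) ℝ) α := by
  ext i j
  simp [Matrix.mul_apply, rightExpand_apply, Matrix.one_apply]

lemma leftExpand_mul {p q : ℕ} (B : Matrix (Fin p) (Fin q) ℝ) (β : ℕ) :
    leftExpand B β = leftExpand (1 : Matrix (Fin p) (Fin p) ℝ) β * B := by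
  ext i j
  simp [Matrix.mul_apply, leftExpand_apply, Matrix.one_apply]

lemma submatrix_mul_id {k l p q : ℕ} (M : Matrix (Fin k) (Fin p) ℝ)
    (B : Matrix (Fin p) (Fin q) ℝ) (f : Fin l → Fin k) :
    (M * B).submatrix f id = M.submatrix f id * B := by
  ext i j
  simp [Matrix.mul_apply, Matrix.submatrix_apply]

lemma dkstp_eq {m n p q : ℕ} (A : Matrix (Fin m) (Fin n) ℝ) (B : Matrix (Fin p) (Fin q) ℝ) :
    A ⊛ B = A * bridge n p * B := by
  simp only [dkstp, bridge]
  rw [rightExpand_mul A, leftExpand_mul B, submatrix_mul_id, rightExpand_mul (1 : Matrix (Fin n) (Fin n) ℝ),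
    leftExpand_mul (1 : Matrix (Fin p) (Fin p) ℝ), Matrix.one_mul, Matrix.mul_one]
  simp only [Matrix.mul_assoc]

/-- The DK-STP Lie bracket `[A,B]_⊛ := A ⊛ B - B ⊛ A`. -/
def brk {m n : ℕ} (A B : Matrix (Fin m) (Fin n) ℝ) : Matrix (Fin m) (Fin n) ℝ :=
  A ⊛ B - B ⊛ A

/-- `[A,B] := A ⊛ B - B ⊛ A` makes `M_{m×n}(ℝ)` a Lie algebra:
it is bilinear, skew-symmetric, and satisfies the Jacobi identity. -/
theorem stmt18 {m n : ℕ} (A B C : Matrix (Fin m) (Fin n) ℝ) (a b : ℝ) :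
    brk (a • A + b • B) C = a • brk A C + b • brk B C ∧
    brk C (a • A + b • B) = a • brk C A + b • brk C B ∧
    brk A B = -brk B A ∧
    brk (brk A B) C + brk (brk B C) A + brk (brk C A) B = 0 := by
  have hd : ∀ X Y : Matrix (Fin m) (Fin n) ℝ, X ⊛ Y = X * bridge n m * Y :=
    fun X Y => dkstp_eq X Y
  refine ⟨?_, ?_, ?_, ?_⟩ <;>
    simp only [brk, hd] <;>
    · simp only [Matrix.add_mul, Matrix.mul_add, Matrix.sub_mul, Matrix.mul_sub,
        Matrix.smul_mul, Matrix.mul_smul, smul_sub, smul_add, Matrix.mul_assoc]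
      abel
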